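/- For each integer n ≥ 0 there exists a constant Cₙ < ∞ such that |(∂ⁿ/∂xⁿ) Q₁(t,x)| ≤ Cₙ / tⁿ for all x ∈ [0,1) and all t ∈ (0,1). -/

import Mathlib

/-!
Write `θ = arccos x`, so that `Q₁ = g · exp (-h / t)` with `h = θ² / 4` and `g = θ / sin θ`.
Both are analytic on a neighbourhood of `[0, 1]`: near `x = 1` because `x = cos θ = C (θ²)` for
the entire function `C u = ∑ (-u)ⁿ / (2n)!`, whose derivative at `0` is `-1/2 ≠ 0`, so `θ²` is the
analytic local inverse of `C` at `1`, and `θ / sin θ` is an entire function of `θ²`.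
Each derivative of `g · exp (-s h)` is again of this form with `g` replaced by `g' - s h' g`,
so the `n`-th derivative is `O(sⁿ)` uniformly on compacts where `h ≥ 0`; take `s = 1 / t`.
-/

open Real Filter Set Topology

noncomputable section

/-- `Q₁(t,x) = (arccos x/√(1−x²))·exp(−(arccos x)²/(4t))`, for `x ∈ [0,1)`. -/
def Q1 (t x : ℝ) : ℝ :=
  (Real.arccos x / Real.sqrt (1 - x ^ 2)) * Real.exp (-(Real.arccos x) ^ 2 / (4 * t))

lemma deriv_mul_exp_neg_mul {g h : ℝ → ℝ} {x : ℝ} (s : ℝ) (hg : DifferentiableAt ℝ g x)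
    (hh : DifferentiableAt ℝ h x) :
    deriv (fun y => g y * exp (-(s * h y))) x =
      deriv g x * exp (-(s * h x)) - s * (deriv h x * g x * exp (-(s * h x))) := by
  have hd : HasDerivAt (fun y => g y * exp (-(s * h y)))
      (deriv g x * exp (-(s * h x)) + g x * (exp (-(s * h x)) * -(s * deriv h x))) x :=
    hg.hasDerivAt.mul (hh.hasDerivAt.const_mul s).neg.exp
  rw [hd.deriv]
  ring

theorem exists_bound_iteratedDeriv_mul_exp_neg_mul {U K : Set ℝ} {h : ℝ → ℝ} (hU : IsOpen U)
    (hK : IsCompact K) (hKU : K ⊆ U) (hh : AnalyticOnNhd ℝ h U) (n : ℕ) :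
    ∀ g : ℝ → ℝ, AnalyticOnNhd ℝ g U → ∃ C, ∀ s, 1 ≤ s → ∀ x ∈ K, 0 ≤ h x →
      |iteratedDeriv n (fun y => g y * exp (-(s * h y))) x| ≤ C * s ^ n := by
  induction n with
  | zero =>
    intro g hg
    obtain ⟨M, hM⟩ := hK.exists_bound_of_continuousOn (hg.continuousOn.mono hKU)
    refine ⟨M, fun s hs x hx hhx => ?_⟩
    have hexp : exp (-(s * h x)) ≤ 1 := exp_le_one_iff.2 (by nlinarith)
    rw [iteratedDeriv_zero, pow_zero, mul_one, abs_mul, abs_exp]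
    have hgx : |g x| ≤ M := by simpa using hM x hx
    exact (mul_le_of_le_one_right (abs_nonneg _) hexp).trans hgx
  | succ n ih =>
    intro g hg
    obtain ⟨C₁, hC₁⟩ := ih (deriv g) hg.deriv
    obtain ⟨C₂, hC₂⟩ := ih (fun y => deriv h y * g y) (hh.deriv.mul hg)
    refine ⟨|C₁| + C₂, fun s hs x hx hhx => ?_⟩
    have hE : AnalyticOnNhd ℝ (fun y => exp (-(s * h y))) U := fun y hy =>
      (analyticAt_const.mul (hh y hy)).neg.rexp'
    have hderiv : deriv (fun y => g y * exp (-(s * h y))) =ᶠ[𝓝 x]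
        fun y => deriv g y * exp (-(s * h y)) - s * (deriv h y * g y * exp (-(s * h y))) := by
      filter_upwards [hU.mem_nhds (hKU hx)] with y hy
      exact deriv_mul_exp_neg_mul s (hg y hy).differentiableAt (hh y hy).differentiableAt
    have hA := (hg.deriv.mul hE) x (hKU hx)
    have hB := ((hh.deriv.mul hg).mul hE) x (hKU hx)
    rw [iteratedDeriv_succ', hderiv.iteratedDeriv_eq, iteratedDeriv_fun_sub hA.contDiffAt
      (contDiffAt_const.mul hB.contDiffAt), iteratedDeriv_const_mul _ hB.contDiffAt]
    have h₁ := hC₁ s hs x hx hhx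
    have h₂ := hC₂ s hs x hx hhx
    calc _ ≤ |iteratedDeriv n (fun y => deriv g y * exp (-(s * h y))) x| +
          s * |iteratedDeriv n (fun y => deriv h y * g y * exp (-(s * h y))) x| := by
          refine (abs_sub _ _).trans_eq ?_
          rw [abs_mul, abs_of_nonneg (by linarith : (0 : ℝ) ≤ s)]
      _ ≤ |C₁| * s ^ (n + 1) + s * (C₂ * s ^ n) := by
          gcongr
          exact h₁.trans (by gcongr; exacts [le_abs_self C₁, n.le_succ])
      _ = (|C₁| + C₂) * s ^ (n + 1) := by ring

open FormalMultilinearSeries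

open scoped Nat in
def cosSqrtCoeff (n : ℕ) : ℝ := (-1) ^ n / (2 * n)!

def cosSqrt : ℝ → ℝ := (ofScalars ℝ cosSqrtCoeff).sum

lemma radius_ofScalars_cosSqrtCoeff : (ofScalars ℝ cosSqrtCoeff).radius = ⊤ := by
  refine radius_eq_top_of_summable_norm _ fun r => ?_
  refine (Real.summable_pow_div_factorial r).of_nonneg_of_le (fun n => by positivity) fun n => ?_
  rw [ofScalars_norm, cosSqrtCoeff, norm_div, norm_pow, norm_neg, norm_one, one_pow,
    Real.norm_natCast, one_div_mul_eq_div]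
  gcongr
  omega

lemma hasFPowerSeriesOnBall_cosSqrt :
    HasFPowerSeriesOnBall cosSqrt (ofScalars ℝ cosSqrtCoeff) 0 ⊤ := by
  have h := (ofScalars ℝ cosSqrtCoeff).hasFPowerSeriesOnBall
    (by simp [radius_ofScalars_cosSqrtCoeff])
  rwa [radius_ofScalars_cosSqrtCoeff] at h

lemma analyticAt_cosSqrt (u : ℝ) : AnalyticAt ℝ cosSqrt u :=
  hasFPowerSeriesOnBall_cosSqrt.analyticAt_of_mem (by simp)

lemma cosSqrt_sq (θ : ℝ) : cosSqrt (θ ^ 2) = cos θ := by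
  have := hasFPowerSeriesOnBall_cosSqrt.hasSum (y := θ ^ 2) (by simp)
  simp only [ofScalars_apply_eq, smul_eq_mul, zero_add, cosSqrtCoeff, ← pow_mul] at this
  refine this.unique ?_
  simpa only [mul_div_right_comm] using Real.hasSum_cos θ

lemma deriv_cosSqrt_zero : deriv cosSqrt 0 = -(1 / 2) := by
  rw [hasFPowerSeriesOnBall_cosSqrt.hasFPowerSeriesAt.deriv, ofScalars_apply_eq, cosSqrtCoeff]
  norm_num [Nat.factorial]

-- `sin θ / θ` as a function of `θ ^ 2`: differentiate `cosSqrt (θ ^ 2) = cos θ`.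
def sincSqrt (u : ℝ) : ℝ := -2 * deriv cosSqrt u

lemma analyticAt_sincSqrt (u : ℝ) : AnalyticAt ℝ sincSqrt u :=
  analyticAt_const.mul (AnalyticOnNhd.deriv (fun v _ => analyticAt_cosSqrt v) u (mem_univ u))

lemma sincSqrt_zero : sincSqrt 0 = 1 := by
  norm_num [sincSqrt, deriv_cosSqrt_zero]

lemma mul_sincSqrt_sq (θ : ℝ) : θ * sincSqrt (θ ^ 2) = sin θ := by
  have hcos : HasDerivAt (cosSqrt ∘ fun θ => θ ^ 2) (-sin θ) θ := by
    simpa only [Function.comp_def, cosSqrt_sq] using hasDerivAt_cos θ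
  have := ((analyticAt_cosSqrt _).differentiableAt.hasDerivAt.comp θ
    (hasDerivAt_pow 2 θ)).unique hcos
  rw [sincSqrt]
  norm_num at this
  linarith

lemma exists_eventually_eq_arccos_sq : ∃ φ : ℝ → ℝ, ∀ᶠ y in 𝓝 1,
    AnalyticAt ℝ φ y ∧ sincSqrt (φ y) ≠ 0 ∧ (y ≤ 1 → φ y = arccos y ^ 2) := by
  have hf := analyticAt_cosSqrt 0
  have hf' : deriv cosSqrt 0 ≠ 0 := by norm_num [deriv_cosSqrt_zero]
  have h1 : cosSqrt 0 = 1 := by simpa using cosSqrt_sq 0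
  set φ := hf.hasStrictDerivAt.localInverse _ _ _ hf'
  have hφ : AnalyticAt ℝ φ 1 := h1 ▸ hf.analyticAt_localInverse hf'
  have hφ1 : φ 1 = 0 := h1 ▸ HasStrictFDerivAt.localInverse_apply_image ..
  have hsinc : ∀ᶠ y in 𝓝 1, sincSqrt (φ y) ≠ 0 := by
    refine ((analyticAt_sincSqrt _).continuousAt.comp hφ.continuousAt).eventually_ne ?_
    simp [hφ1, sincSqrt_zero]
  have harccos : Tendsto (fun y => arccos y ^ 2) (𝓝 1) (𝓝 0) :=
    (continuous_arccos.pow 2).tendsto' 1 0 (by simp)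
  refine ⟨φ, ?_⟩
  filter_upwards [hφ.eventually_analyticAt, hsinc,
    harccos.eventually (hf.hasStrictDerivAt.eventually_left_inverse hf'),
    Ioi_mem_nhds (by norm_num : (-1 : ℝ) < 1)] with y hy_an hy_sinc hy_inv hy_gt
  refine ⟨hy_an, hy_sinc, fun hy => ?_⟩
  rwa [cosSqrt_sq, cos_arccos hy_gt.le hy] at hy_inv

lemma sincSqrt_arccos_sq_pos {x : ℝ} (hx : x ∈ Ioo (-1) 1) : 0 < sincSqrt (arccos x ^ 2) := by
  have hθ : 0 < arccos x := arccos_pos.2 hx.2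
  have hsin : 0 < arccos x * sincSqrt (arccos x ^ 2) := by
    rw [mul_sincSqrt_sq, sin_arccos]
    exact sqrt_pos.2 (by nlinarith [hx.1, hx.2])
  exact pos_of_mul_pos_right hsin hθ.le

lemma analyticAt_arccos {x : ℝ} (hx : x ∈ Ioo (-1) 1) : AnalyticAt ℝ arccos x :=
  (contDiffAt_arccos hx.1.ne' hx.2.ne).analyticAt

lemma exists_analyticOnNhd_eqOn_arccos_sq : ∃ U : Set ℝ, ∃ H : ℝ → ℝ, IsOpen U ∧
    Ioc (-1) 1 ⊆ U ∧ AnalyticOnNhd ℝ H U ∧ (∀ x ∈ U, sincSqrt (H x) ≠ 0) ∧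
    EqOn H (fun x => arccos x ^ 2) (Ioo (-1) 1) := by
  obtain ⟨φ, hφ⟩ := exists_eventually_eq_arccos_sq
  obtain ⟨V, hVφ, hV, hV1⟩ := eventually_nhds_iff.1 hφ
  set H : ℝ → ℝ := fun x => if x < 1 then arccos x ^ 2 else φ x
  have hH_arccos : EqOn H (fun x => arccos x ^ 2) (Ioo (-1) 1) := fun x hx => if_pos hx.2
  have hH_φ : EqOn H φ V := by
    intro x hx
    by_cases hx1 : x < 1
    · exact (if_pos hx1).trans ((hVφ x hx).2.2 hx1.le).symm
    · exact if_neg hx1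
  refine ⟨Ioo (-1) 1 ∪ V, H, isOpen_Ioo.union hV, ?_, ?_, ?_, hH_arccos⟩
  · intro x hx
    rcases hx.2.lt_or_eq with hx1 | rfl
    exacts [Or.inl ⟨hx.1, hx1⟩, Or.inr hV1]
  · rintro x (hx | hx)
    · refine ((analyticAt_arccos hx).pow 2).congr ?_
      exact eventuallyEq_of_mem (isOpen_Ioo.mem_nhds hx) hH_arccos.symm
    · exact (hVφ x hx).1.congr (eventuallyEq_of_mem (hV.mem_nhds hx) hH_φ.symm)
  · rintro x (hx | hx)
    · rw [hH_arccos hx]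
      exact (sincSqrt_arccos_sq_pos hx).ne'
    · rw [hH_φ hx]
      exact (hVφ x hx).2.1

lemma Q1_eq_inv_sincSqrt_mul_exp {t x : ℝ} (hx : x < 1) :
    Q1 t x = (sincSqrt (arccos x ^ 2))⁻¹ * exp (-(t⁻¹ * (arccos x ^ 2 / 4))) := by
  rw [Q1, ← sin_arccos, ← mul_sincSqrt_sq, div_mul_cancel_left₀ (arccos_pos.2 hx).ne']
  ring_nf

/-- Lemma `l.Q1`: for each `n ≥ 0` there is `Cₙ < ∞` with
`|∂ⁿ/∂xⁿ Q₁(t,x)| ≤ Cₙ/tⁿ` for all `x ∈ [0,1)` and `t ∈ (0,1)`. -/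
theorem statement10 (n : ℕ) :
    ∃ C : ℝ, ∀ x ∈ Set.Ico (0 : ℝ) 1, ∀ t ∈ Set.Ioo (0 : ℝ) 1,
      |iteratedDeriv n (fun x : ℝ => Q1 t x) x| ≤ C / t ^ n := by
  obtain ⟨U, H, hU, hIocU, hH, hsinc, hH_eq⟩ := exists_analyticOnNhd_eqOn_arccos_sq
  have hg : AnalyticOnNhd ℝ (fun x => (sincSqrt (H x))⁻¹) U := fun x hx =>
    ((analyticAt_sincSqrt _).comp (hH x hx)).inv (hsinc x hx)
  obtain ⟨C, hC⟩ := exists_bound_iteratedDeriv_mul_exp_neg_mul hU (isCompact_Icc (a := 0) (b := 1))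
    (fun x hx => hIocU ⟨by linarith [hx.1], hx.2⟩) (fun x hx => (hH x hx).div_const) n _ hg
  refine ⟨C, fun x hx t ht => ?_⟩
  have hx' : x ∈ Ioo (-1) 1 := ⟨by linarith [hx.1], hx.2⟩
  have hQ : (fun x => Q1 t x) =ᶠ[𝓝 x] fun y => (sincSqrt (H y))⁻¹ * exp (-(t⁻¹ * (H y / 4))) := by
    filter_upwards [isOpen_Ioo.mem_nhds hx'] with y hy
    rw [Q1_eq_inv_sincSqrt_mul_exp hy.2, hH_eq hy]
  rw [hQ.iteratedDeriv_eq, div_eq_mul_inv, ← inv_pow]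
  refine hC t⁻¹ ((one_le_inv₀ ht.1).2 ht.2.le) x ⟨hx.1, hx.2.le⟩ ?_
  rw [hH_eq hx']
  positivity
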